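/- arXiv:2401.07400 — 4 statements merged into one kernel-verified Lean document; each statement's English description precedes it below -/
import Mathlib

section
/- Let C = {1,2}, σ² > 0, b > 0, a ≥ 0, s ∈ ℝ. Then the pairwise time-lag radial basis function (LRBF) kernel K((t,l),(t',l')) := (σ² / (𝟙{l ≠ l'}·a² + 1)^{1/2}) · exp( −b (t − t' − 𝟙{l ≠ l'}·s)² / (𝟙{l ≠ l'}·a² + 1) ), where 𝟙{l ≠ l'} equals 1 if l ≠ l' and 0 otherwise, is a positive semidefinite kernel on ℝ × C. -/
/-!
Only the symmetric part of a kernel enters its quadratic form. Writing `D = a² + 1`,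
`g_D u = exp (-b u² / D) / √D` and `τ_ε (t, l) = t + ε 𝟙{l = 2} s`, the symmetrised LRBF
kernel is
`σ²/2 (g_D (τ₁ p - τ₁ q) + g_D (τ₋₁ p - τ₋₁ q)) + σ² 𝟙{l = l'} (g_1 - g_D) (t - t')`.
Now `g_D` is the cosine transform of the Gaussian `ω ↦ exp (-D ω² / (4b)) / √(4πb)`, which
decreases in `D`, so `g_D` and `g_1 - g_D` are integrals of the positive semidefinite kernels
`cos (ω (x - y))` against nonnegative weights.
-/

/-- A kernel `K` on a set `X` is positive semidefinite if for every finite family of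
points and real coefficients, `∑ i j, c i * c j * K (x i) (x j) ≥ 0`. -/
def IsPSDKernel {X : Type*} (K : X → X → ℝ) : Prop :=
  ∀ (n : ℕ) (x : Fin n → X) (c : Fin n → ℝ),
    0 ≤ ∑ i, ∑ j, c i * c j * K (x i) (x j)

open MeasureTheory Real Finset

theorem two_mul_quadForm {X : Type*} (K : X → X → ℝ) {n : ℕ} (x : Fin n → X)
    (c : Fin n → ℝ) :
    2 * ∑ i, ∑ j, c i * c j * K (x i) (x j) =
      ∑ i, ∑ j, c i * c j * (K (x i) (x j) + K (x j) (x i)) := by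
  have h_swap :
      ∑ i, ∑ j, c i * c j * K (x j) (x i) = ∑ i, ∑ j, c i * c j * K (x i) (x j) := by
    rw [sum_comm]
    exact sum_congr rfl fun i _ => sum_congr rfl fun j _ => by ring
  simp only [mul_add, sum_add_distrib, h_swap]
  ring

namespace IsPSDKernel

variable {X Y : Type*} {K L : X → X → ℝ}

theorem add (hK : IsPSDKernel K) (hL : IsPSDKernel L) :
    IsPSDKernel fun x y => K x y + L x y := by
  intro n x c
  simp only [mul_add, sum_add_distrib]
  exact add_nonneg (hK n x c) (hL n x c)

theorem const_mul (hK : IsPSDKernel K) {r : ℝ} (hr : 0 ≤ r) :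
    IsPSDKernel fun x y => r * K x y := by
  intro n x c
  simpa only [mul_sum, mul_left_comm r] using mul_nonneg hr (hK n x c)

theorem comp (hK : IsPSDKernel K) (f : Y → X) : IsPSDKernel fun y y' => K (f y) (f y') :=
  fun n y c => hK n (f ∘ y) c

theorem ite_eq_mul {Λ : Type*} [DecidableEq Λ] (hK : IsPSDKernel K) (g : X → Λ) :
    IsPSDKernel fun x y => (if g x = g y then 1 else 0) * K x y := by
  intro n x c
  set labels := univ.image fun i => g (x i)
  have h_fibres : ∀ i j, (if g (x i) = g (x j) then (1 : ℝ) else 0) =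
      ∑ k ∈ labels, (if g (x i) = k then 1 else 0) * (if g (x j) = k then 1 else 0) := by
    intro i j
    simp only [ite_mul, one_mul, zero_mul, sum_ite_eq', labels,
      mem_image_of_mem (fun i => g (x i)) (mem_univ i), if_true, eq_comm]
  calc (0 : ℝ) ≤ ∑ k ∈ labels, ∑ i, ∑ j, (c i * if g (x i) = k then 1 else 0) *
        (c j * if g (x j) = k then 1 else 0) * K (x i) (x j) :=
      sum_nonneg fun k _ => hK n x _
    _ = _ := by
      simp only [h_fibres, mul_sum, sum_mul]
      rw [sum_comm]
      refine sum_congr rfl fun i _ => ?_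
      rw [sum_comm]
      refine sum_congr rfl fun j _ => sum_congr rfl fun k _ => by ring

theorem of_add_swap_eq (hL : IsPSDKernel L) (h : ∀ x y, K x y + K y x = L x y + L y x) :
    IsPSDKernel K := by
  intro n x c
  have h_two : 2 * ∑ i, ∑ j, c i * c j * K (x i) (x j) =
      2 * ∑ i, ∑ j, c i * c j * L (x i) (x j) := by
    simp only [two_mul_quadForm, h]
  linarith [hL n x c]

theorem integral {Ω : Type*} [MeasurableSpace Ω] {μ : Measure Ω} {F : Ω → X → X → ℝ}
    (hF : ∀ ω, IsPSDKernel (F ω)) (hF_int : ∀ x y, Integrable (fun ω => F ω x y) μ) :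
    IsPSDKernel fun x y => ∫ ω, F ω x y ∂μ := by
  intro n x c
  have h_int : ∀ i j, Integrable (fun ω => c i * c j * F ω (x i) (x j)) μ :=
    fun i j => (hF_int _ _).const_mul _
  calc (0 : ℝ) ≤ ∫ ω, ∑ i, ∑ j, c i * c j * F ω (x i) (x j) ∂μ :=
      integral_nonneg fun ω => hF ω n x c
    _ = _ := by
      rw [integral_finsetSum _ fun i _ => integrable_finsetSum _ fun j _ => h_int i j]
      refine sum_congr rfl fun i _ => ?_
      rw [integral_finsetSum _ fun j _ => h_int i j]
      simp only [integral_const_mul]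

end IsPSDKernel

theorem isPSDKernel_cos_mul_sub (ω : ℝ) : IsPSDKernel fun x y : ℝ => cos (ω * (x - y)) := by
  intro n x c
  have h : ∑ i, ∑ j, c i * c j * cos (ω * (x i - x j)) =
      (∑ i, c i * cos (ω * x i)) ^ 2 + (∑ i, c i * sin (ω * x i)) ^ 2 := by
    simp only [sq, sum_mul_sum, ← sum_add_distrib, mul_sub, cos_sub]
    exact sum_congr rfl fun i _ => sum_congr rfl fun j _ => by ring
  rw [h]
  positivity

theorem MeasureTheory.Integrable.mul_cos_mul {w : ℝ → ℝ} (hw : Integrable w) (u : ℝ) :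
    Integrable fun ω => w ω * cos (ω * u) :=
  hw.mul_bdd (by fun_prop : Continuous fun ω => cos (ω * u)).aestronglyMeasurable
    (.of_forall fun ω => (norm_eq_abs _).trans_le (abs_cos_le_one _))

theorem isPSDKernel_integral_mul_cos {w : ℝ → ℝ} (hw : 0 ≤ w) (hw_int : Integrable w) :
    IsPSDKernel fun x y : ℝ => ∫ ω, w ω * cos (ω * (x - y)) :=
  IsPSDKernel.integral (fun ω => (isPSDKernel_cos_mul_sub ω).const_mul (hw ω)) fun x y =>
    hw_int.mul_cos_mul (x - y)

theorem integral_exp_neg_mul_sq_mul_cos {q : ℝ} (hq : 0 < q) (u : ℝ) :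
    ∫ ω, exp (-q * ω ^ 2) * cos (ω * u) = √(π / q) * exp (-u ^ 2 / (4 * q)) := by
  have h_fourier := fourierIntegral_gaussian (b := q) (by simpa using hq) u
  have h_int :
      Integrable fun ω : ℝ => Complex.exp (Complex.I * u * ω) * Complex.exp (-q * ω ^ 2) :=
    .of_integral_ne_zero (by rw [h_fourier]; simp [pi_ne_zero, hq.ne', Complex.exp_ne_zero])
  have h_re : ∀ ω : ℝ, (Complex.exp (Complex.I * u * ω) * Complex.exp (-q * ω ^ 2)).re =
      exp (-q * ω ^ 2) * cos (ω * u) := by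
    intro ω
    rw [← Complex.exp_add, Complex.exp_re]
    simp [sq, mul_comm u]
  have h_sqrt : ((π : ℂ) / q) ^ (1 / 2 : ℂ) = (√(π / q) : ℝ) := by
    rw [sqrt_eq_rpow, ← Complex.ofReal_div, Complex.ofReal_cpow (by positivity)]
    norm_num
  have := integral_re h_int
  simp only [RCLike.re_to_complex, h_re] at this
  rw [this, h_fourier, h_sqrt]
  norm_cast

noncomputable def gaussianSpectralDensity (b D ω : ℝ) : ℝ :=
  (√(4 * π * b))⁻¹ * exp (-(D / (4 * b)) * ω ^ 2)

section gaussianSpectralDensity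

variable {b D : ℝ}

theorem gaussianSpectralDensity_nonneg : 0 ≤ gaussianSpectralDensity b D := fun ω => by
  unfold gaussianSpectralDensity
  positivity

theorem gaussianSpectralDensity_le_of_le (hb : 0 < b) {D' : ℝ} (hD : D ≤ D') (ω : ℝ) :
    gaussianSpectralDensity b D' ω ≤ gaussianSpectralDensity b D ω := by
  unfold gaussianSpectralDensity
  gcongr

theorem integrable_gaussianSpectralDensity (hb : 0 < b) (hD : 0 < D) :
    Integrable (gaussianSpectralDensity b D) :=
  (integrable_exp_neg_mul_sq (by positivity)).const_mul _

theorem integral_gaussianSpectralDensity_mul_cos (hb : 0 < b) (hD : 0 < D) (u : ℝ) :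
    ∫ ω, gaussianSpectralDensity b D ω * cos (ω * u) = exp (-b * u ^ 2 / D) / √D := by
  simp only [gaussianSpectralDensity, mul_assoc]
  rw [integral_const_mul, integral_exp_neg_mul_sq_mul_cos (by positivity)]
  have h_sqrt : √(π / (D / (4 * b))) = √(4 * π * b) / √D := by
    rw [← sqrt_div' _ hD.le]
    congr 1
    field_simp
  have h_exp : -u ^ 2 / (4 * (D / (4 * b))) = -b * u ^ 2 / D := by
    field_simp
  rw [h_sqrt, h_exp]
  field_simp

theorem isPSDKernel_exp_neg_mul_sq_div (hb : 0 < b) (hD : 0 < D) :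
    IsPSDKernel fun x y : ℝ => exp (-b * (x - y) ^ 2 / D) / √D := by
  simpa only [integral_gaussianSpectralDensity_mul_cos hb hD] using
    isPSDKernel_integral_mul_cos gaussianSpectralDensity_nonneg
      (integrable_gaussianSpectralDensity hb hD)

theorem isPSDKernel_exp_neg_mul_sq_sub (hb : 0 < b) (hD : 1 ≤ D) :
    IsPSDKernel fun x y : ℝ => exp (-b * (x - y) ^ 2) - exp (-b * (x - y) ^ 2 / D) / √D := by
  have h_int (D : ℝ) (hD : 0 < D) (u : ℝ) :=
    (integrable_gaussianSpectralDensity hb hD).mul_cos_mul u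
  have h_eq (u : ℝ) : ∫ ω, (gaussianSpectralDensity b 1 ω - gaussianSpectralDensity b D ω) *
      cos (ω * u) = exp (-b * u ^ 2) - exp (-b * u ^ 2 / D) / √D := by
    simp only [sub_mul]
    rw [integral_sub (h_int 1 one_pos u) (h_int D (by linarith) u),
      integral_gaussianSpectralDensity_mul_cos hb one_pos,
      integral_gaussianSpectralDensity_mul_cos hb (by linarith)]
    simp
  simpa only [h_eq] using isPSDKernel_integral_mul_cos
    (fun ω => sub_nonneg.2 (gaussianSpectralDensity_le_of_le hb hD ω))
    ((integrable_gaussianSpectralDensity hb one_pos).sub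
      (integrable_gaussianSpectralDensity hb (by linarith)))

end gaussianSpectralDensity

theorem gplag_LRBF_psd_general (σ2 b a s : ℝ) (hσ2 : 0 < σ2) (hb : 0 < b) :
    IsPSDKernel (fun p q : ℝ × Fin 2 =>
      σ2 / Real.sqrt ((if p.2 ≠ q.2 then (1 : ℝ) else 0) * a ^ 2 + 1) *
        Real.exp (-b * (p.1 - q.1 - (if p.2 ≠ q.2 then (1 : ℝ) else 0) * s) ^ 2 /
          ((if p.2 ≠ q.2 then (1 : ℝ) else 0) * a ^ 2 + 1))) := by
  have hD : 1 ≤ a ^ 2 + 1 := le_add_of_nonneg_left (sq_nonneg a)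
  let τ (ε : ℝ) (p : ℝ × Fin 2) : ℝ := p.1 + ε * if p.2 = 1 then s else 0
  have h_cross := isPSDKernel_exp_neg_mul_sq_div hb (by linarith : 0 < a ^ 2 + 1)
  have h_shifted := (h_cross.comp (τ 1)).add (h_cross.comp (τ (-1)))
  have h_same := (isPSDKernel_exp_neg_mul_sq_sub hb hD).comp (Prod.fst : ℝ × Fin 2 → ℝ)
  have h_L := (h_shifted.const_mul (half_pos hσ2).le).add
    ((h_same.ite_eq_mul Prod.snd).const_mul hσ2.le)
  refine h_L.of_add_swap_eq ?_
  rintro ⟨t, l⟩ ⟨t', l'⟩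
  fin_cases l <;> fin_cases l' <;> simp [τ] <;> ring_nf

/-- The pairwise time-lag radial basis function (LRBF) kernel
`K((t,l),(t',l')) = σ²/(𝟙{l≠l'}a²+1)^{1/2} · exp(-b(t-t'-𝟙{l≠l'}s)²/(𝟙{l≠l'}a²+1))`
is a positive semidefinite kernel on `ℝ × {1,2}`. -/
theorem gplag_LRBF_psd (σ2 b a s : ℝ) (hσ2 : 0 < σ2) (hb : 0 < b) (ha : 0 ≤ a) :
    IsPSDKernel (fun p q : ℝ × Fin 2 =>
      σ2 / Real.sqrt ((if p.2 ≠ q.2 then (1 : ℝ) else 0) * a ^ 2 + 1) *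
        Real.exp (-b * (p.1 - q.1 - (if p.2 ≠ q.2 then (1 : ℝ) else 0) * s) ^ 2 /
          ((if p.2 ≠ q.2 then (1 : ℝ) else 0) * a ^ 2 + 1))) :=
  gplag_LRBF_psd_general σ2 b a s hσ2 hb
end

section
/- Let ν > 0, b, b̃ > 0, and δ > 0. Then the function ω ↦ ( ((b̃² + ω²) / (b² + ω²))^{ν + 1/2} − 1 )² is Lebesgue integrable on the interval (δ, ∞). (This is the sufficiency direction of the integral test for equivalence: when the microergodic parameters agree, the squared relative difference of the two spectral densities has finite tail integral.) -/
open MeasureTheory Set Filter Asymptotics Topology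

/-!
The ratio `u(ω) = (b̃² + ω²) / (b² + ω²)` satisfies `u(ω) - 1 = (b̃² - b²) / (b² + ω²) = O(ω⁻²)`,
and since `y ↦ y ^ p` is differentiable at `1`, also `u(ω) ^ p - 1 = O(u(ω) - 1) = O(ω⁻²)`.
The integrand is therefore `O(ω⁻⁴)` at infinity, and it is continuous on `[δ, ∞)` because
`u` stays positive away from `ω = 0`.
-/

theorem rpow_sub_one_isBigO_sub_one {α : Type*} {l : Filter α} {g : α → ℝ}
    (hg : Tendsto g l (𝓝 1)) (p : ℝ) :
    (fun x => g x ^ p - 1) =O[l] fun x => g x - 1 := by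
  have hderiv : HasDerivAt (fun y : ℝ => y ^ p) (p * 1 ^ (p - 1)) 1 :=
    Real.hasDerivAt_rpow_const (Or.inl one_ne_zero)
  simpa [Function.comp_def] using hderiv.isBigO_sub.comp_tendsto hg

theorem sq_add_div_sq_add_sub_one_isBigO (b bt : ℝ) :
    (fun ω : ℝ => (bt ^ 2 + ω ^ 2) / (b ^ 2 + ω ^ 2) - 1) =O[atTop] fun ω => ω ^ (-2 : ℝ) := by
  refine IsBigO.of_bound |bt ^ 2 - b ^ 2| ?_
  filter_upwards [eventually_gt_atTop 0] with ω hω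
  have hden : 0 < b ^ 2 + ω ^ 2 := by positivity
  calc ‖(bt ^ 2 + ω ^ 2) / (b ^ 2 + ω ^ 2) - 1‖ = |bt ^ 2 - b ^ 2| / (b ^ 2 + ω ^ 2) := by
        rw [div_sub_one hden.ne', Real.norm_eq_abs, abs_div, abs_of_pos hden]
        ring_nf
    _ ≤ |bt ^ 2 - b ^ 2| / ω ^ 2 :=
        div_le_div_of_nonneg_left (abs_nonneg _) (by positivity) (by nlinarith)
    _ = |bt ^ 2 - b ^ 2| * ‖ω ^ (-2 : ℝ)‖ := by
        rw [Real.rpow_neg hω.le, Real.rpow_two, Real.norm_of_nonneg (by positivity), div_eq_mul_inv]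

theorem continuousOn_rpow_sq_add_div_sq_add (b bt p : ℝ) :
    ContinuousOn (fun ω : ℝ => (((bt ^ 2 + ω ^ 2) / (b ^ 2 + ω ^ 2)) ^ p - 1) ^ 2) (Ioi 0) := by
  intro ω (hω : 0 < ω)
  have hden : b ^ 2 + ω ^ 2 ≠ 0 := by positivity
  have hratio : (bt ^ 2 + ω ^ 2) / (b ^ 2 + ω ^ 2) ≠ 0 := by positivity
  refine ContinuousAt.continuousWithinAt ?_
  fun_prop (disch := first | exact hden | exact Or.inl hratio)

theorem matern_spectral_ratio_tail_integrable_general (ν b bt δ : ℝ)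
    (hδ : 0 < δ) :
    IntegrableOn
      (fun ω : ℝ => (((bt ^ 2 + ω ^ 2) / (b ^ 2 + ω ^ 2)) ^ (ν + 1 / 2) - 1) ^ 2)
      (Ioi δ) volume := by
  have hratio := sq_add_div_sq_add_sub_one_isBigO b bt
  have hlim : Tendsto (fun ω : ℝ => (bt ^ 2 + ω ^ 2) / (b ^ 2 + ω ^ 2)) atTop (𝓝 1) :=
    tendsto_sub_nhds_zero_iff.mp (hratio.trans_tendsto (tendsto_rpow_neg_atTop two_pos))
  have hO : (fun ω : ℝ => (((bt ^ 2 + ω ^ 2) / (b ^ 2 + ω ^ 2)) ^ (ν + 1 / 2) - 1) ^ 2)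
      =O[atTop] fun ω => ω ^ (-4 : ℝ) := by
    refine (((rpow_sub_one_isBigO_sub_one hlim _).trans hratio).pow 2).trans_eventuallyEq ?_
    filter_upwards [eventually_ge_atTop 0] with ω hω
    rw [← Real.rpow_natCast, ← Real.rpow_mul hω]
    norm_num
  have hloc := ((continuousOn_rpow_sq_add_div_sq_add b bt (ν + 1 / 2)).mono fun ω (hω : δ ≤ ω) =>
    hδ.trans_le hω).locallyIntegrableOn (μ := volume) measurableSet_Ici
  exact (hloc.integrableOn_of_isBigO_atTop hO
    (integrableAtFilter_rpow_atTop_iff.mpr (by norm_num))).mono_set Ioi_subset_Ici_self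

/-- Sufficiency direction of the integral test for equivalence of GPlag/LMat models:
for any `ν > 0`, lengthscales `b, b̃ > 0` and `δ > 0`, the squared relative difference
`(((b̃²+ω²)/(b²+ω²))^{ν+1/2} - 1)²` of the two spectral densities is Lebesgue
integrable on `(δ, ∞)`. -/
theorem matern_spectral_ratio_tail_integrable (ν b bt δ : ℝ)
    (hν : 0 < ν) (hb : 0 < b) (hbt : 0 < bt) (hδ : 0 < δ) :
    IntegrableOn
      (fun ω : ℝ => (((bt ^ 2 + ω ^ 2) / (b ^ 2 + ω ^ 2)) ^ (ν + 1 / 2) - 1) ^ 2)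
      (Ioi δ) volume :=
  matern_spectral_ratio_tail_integrable_general ν b bt δ hδ
end

section
/- Let ν > 0, b, b̃ > 0, δ > 0, c > 0 and Δ ∈ ℝ, and suppose (c, Δ) ≠ (1, 0). Then the function ω ↦ | c · exp(iωΔ) · ((b̃² + ω²)/(b² + ω²))^{ν + 1/2} − 1 |² (squared complex modulus) is NOT Lebesgue integrable on the interval (δ, ∞). (This is the necessity direction of the integral test: if the microergodic parameters of two GPlag/LMat kernels differ, the squared relative difference of their spectral densities has infinite tail integral.) -/
open MeasureTheory Set Complex Filter

lemma aux_not_int (f : ℝ → ℝ) (δ ε : ℝ) (hε : 0 < ε) (S : Set ℝ)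
    (hSm : MeasurableSet S) (hsub : S ⊆ Ioi δ) (hvol : volume S = ⊤)
    (hf : ∀ ω ∈ S, ε ≤ f ω) : ¬ IntegrableOn f (Ioi δ) volume := by
  intro h
  have h2 : IntegrableOn f S volume := h.mono_set hsub
  have h3 := h2.hasFiniteIntegral
  have h4 : (∫⁻ a in S, ENNReal.ofReal ε ∂volume) ≤ ∫⁻ a in S, ‖f a‖ₑ ∂volume :=
    setLIntegral_mono' hSm (fun a ha => by
      rw [Real.enorm_eq_ofReal_abs]
      exact ENNReal.ofReal_le_ofReal ((hf a ha).trans (le_abs_self _)))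
  rw [setLIntegral_const, hvol, ENNReal.mul_top ((ENNReal.ofReal_pos.mpr hε).ne')] at h4
  rw [HasFiniteIntegral] at h3
  exact absurd h3 (by simp [top_le_iff.mp h4])

lemma aux_re (c R θ : ℝ) :
    ((c : ℂ) * Complex.exp ((θ : ℂ) * Complex.I) * (R : ℂ) - 1).re
      = c * Real.cos θ * R - 1 := by
  rw [Complex.exp_mul_I]
  simp [Complex.cos_ofReal_re]

/-- Necessity direction of the integral test: if the microergodic parameters of two
GPlag/LMat kernels differ, i.e. `(c, Δ) ≠ (1, 0)` where
`c = (σ²b^{2ν}(ã²+1)^{ν+1/2})/(σ̃²b̃^{2ν}(a²+1)^{ν+1/2})` and `Δ = s - s̃`, then the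
squared modulus `|c·e^{iωΔ}·((b̃²+ω²)/(b²+ω²))^{ν+1/2} - 1|²` is NOT Lebesgue
integrable on `(δ, ∞)`. -/
theorem matern_spectral_ratio_tail_not_integrable (ν b bt δ c Δ : ℝ)
    (hν : 0 < ν) (hb : 0 < b) (hbt : 0 < bt) (hδ : 0 < δ) (hc : 0 < c)
    (hne : (c, Δ) ≠ (1, 0)) :
    ¬ IntegrableOn
      (fun ω : ℝ => ‖(c : ℂ) * Complex.exp (Complex.I * ω * Δ) *
          ((((bt ^ 2 + ω ^ 2) / (b ^ 2 + ω ^ 2)) ^ (ν + 1 / 2) : ℝ) : ℂ) - 1‖ ^ 2)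
      (Ioi δ) volume := by
  set R : ℝ → ℝ := fun ω => ((bt ^ 2 + ω ^ 2) / (b ^ 2 + ω ^ 2)) ^ (ν + 1 / 2) with hRdef
  set f : ℝ → ℝ := fun ω : ℝ => ‖(c : ℂ) * Complex.exp (Complex.I * ω * Δ) *
          ((((bt ^ 2 + ω ^ 2) / (b ^ 2 + ω ^ 2)) ^ (ν + 1 / 2) : ℝ) : ℂ) - 1‖ ^ 2 with hfdef
  have hRpos : ∀ ω : ℝ, 0 ≤ R ω := fun ω =>
    Real.rpow_nonneg (div_nonneg (by positivity) (by positivity)) _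
  have hre : ∀ ω : ℝ,
      ((c : ℂ) * Complex.exp (Complex.I * ω * Δ) * ((R ω : ℝ) : ℂ) - 1).re
        = c * Real.cos (ω * Δ) * R ω - 1 := by
    intro ω
    rw [show Complex.I * (ω : ℂ) * (Δ : ℂ) = ((ω * Δ : ℝ) : ℂ) * Complex.I by
      push_cast; ring]
    exact aux_re c (R ω) (ω * Δ)
  have hlow : ∀ ω : ℝ, (c * Real.cos (ω * Δ) * R ω - 1) ^ 2 ≤ f ω := by
    intro ω
    have h2 : f ω = Complex.normSq ((c : ℂ) * Complex.exp (Complex.I * ω * Δ) *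
        ((R ω : ℝ) : ℂ) - 1) := Complex.sq_norm _
    rw [h2, Complex.normSq_apply, ← hre ω]
    nlinarith [sq_nonneg (((c : ℂ) * Complex.exp (Complex.I * ω * Δ) *
        ((R ω : ℝ) : ℂ) - 1).im)]
  by_cases hΔ : Δ = 0
  · -- Δ = 0, c ≠ 1
    subst hΔ
    have hc1 : c ≠ 1 := fun h => hne (by simp [h])
    have hfeq : ∀ ω : ℝ, f ω = (c * R ω - 1) ^ 2 := by
      intro ω
      have h0 : (Complex.I * (ω : ℂ) * ((0 : ℝ) : ℂ)) = 0 := by simp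
      simp only [hfdef, h0, Complex.exp_zero, mul_one]
      rw [show (c : ℂ) * ((((bt ^ 2 + ω ^ 2) / (b ^ 2 + ω ^ 2)) ^ (ν + 1 / 2) : ℝ) : ℂ) - 1
          = ((c * R ω - 1 : ℝ) : ℂ) by push_cast [hRdef]; ring]
      rw [Complex.norm_real, Real.norm_eq_abs, _root_.sq_abs]
    have hg1 : Tendsto (fun ω : ℝ => b ^ 2 + ω ^ 2) atTop atTop :=
      tendsto_atTop_add_const_left _ _ (tendsto_pow_atTop two_ne_zero)
    have hg0 : Tendsto (fun ω : ℝ => (bt ^ 2 - b ^ 2) / (b ^ 2 + ω ^ 2)) atTop (nhds 0) :=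
      Tendsto.div_atTop tendsto_const_nhds hg1
    have hgeq : ∀ ω : ℝ, (bt ^ 2 + ω ^ 2) / (b ^ 2 + ω ^ 2)
        = 1 + (bt ^ 2 - b ^ 2) / (b ^ 2 + ω ^ 2) := by
      intro ω
      have h0 : (b : ℝ) ^ 2 + ω ^ 2 ≠ 0 := by positivity
      field_simp
      ring
    have hg : Tendsto (fun ω : ℝ => (bt ^ 2 + ω ^ 2) / (b ^ 2 + ω ^ 2)) atTop (nhds 1) := by
      have h := tendsto_const_nhds (x := (1 : ℝ)) (f := atTop (α := ℝ)) |>.add hg0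
      simp only [add_zero] at h
      exact h.congr (fun ω => (hgeq ω).symm)
    have hR1 : Tendsto R atTop (nhds 1) := by
      have h := hg.rpow_const (p := ν + 1 / 2) (Or.inl one_ne_zero)
      rw [Real.one_rpow] at h
      exact h
    have hftend : Tendsto f atTop (nhds ((c - 1) ^ 2)) := by
      have h := ((hR1.const_mul c).sub (tendsto_const_nhds (x := (1 : ℝ)))).pow 2
      simp only [mul_one] at h
      exact h.congr (fun ω => (hfeq ω).symm)
    have hε : 0 < (c - 1) ^ 2 / 2 := by
      have h1 : c - 1 ≠ 0 := sub_ne_zero.mpr hc1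
      positivity
    have hev : ∀ᶠ ω in atTop, (c - 1) ^ 2 / 2 ≤ f ω :=
      hftend.eventually (eventually_ge_nhds (by linarith))
    obtain ⟨M, hM⟩ := Filter.eventually_atTop.mp hev
    refine aux_not_int f δ ((c - 1) ^ 2 / 2) hε (Ioi (max δ M)) measurableSet_Ioi
      (Ioi_subset_Ioi (le_max_left _ _)) (by simp [Real.volume_Ioi]) ?_
    intro ω hω
    exact hM ω ((le_max_right δ M).trans (le_of_lt hω))
  · -- Δ ≠ 0
    have hd : 0 < |Δ| := abs_pos.mpr hΔ
    have hπ := Real.pi_pos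
    have hπ3 := Real.pi_gt_three
    obtain ⟨K, hK⟩ := exists_nat_gt (δ * |Δ|)
    set a : ℕ → ℝ := fun k => (Real.pi / 2 + 2 * Real.pi * ((k : ℝ) + K)) / |Δ| with hadef
    have ha : ∀ k : ℕ, δ < a k := by
      intro k
      rw [hadef, lt_div_iff₀ hd]
      have hk0 : (0 : ℝ) ≤ (k : ℝ) := Nat.cast_nonneg k
      have hK0 : (0 : ℝ) ≤ (K : ℝ) := Nat.cast_nonneg K
      nlinarith
    set S : Set ℝ := ⋃ k : ℕ, Icc (a k) (a k + Real.pi / |Δ|) with hSdef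
    have hkey : ∀ {m n : ℕ}, m < n → a m + Real.pi / |Δ| < a n := by
      intro m n hmn
      have hmn' : (m : ℝ) + 1 ≤ n := by exact_mod_cast hmn
      rw [hadef, ← add_div]
      apply div_lt_div_of_pos_right ?_ hd
      nlinarith
    have hSm : MeasurableSet S := MeasurableSet.iUnion (fun k => measurableSet_Icc)
    have hsub : S ⊆ Ioi δ := by
      intro ω hω
      obtain ⟨k, hk⟩ := mem_iUnion.mp hω
      exact lt_of_lt_of_le (ha k) hk.1
    have hvol : volume S = ⊤ := by
      rw [hSdef, measure_iUnion ?_ (fun k => measurableSet_Icc)]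
      · have heq : ∀ k : ℕ, volume (Icc (a k) (a k + Real.pi / |Δ|))
            = ENNReal.ofReal (Real.pi / |Δ|) := by
          intro k; rw [Real.volume_Icc]; ring_nf
        rw [tsum_congr heq]
        exact ENNReal.tsum_const_eq_top_of_ne_zero
          ((ENNReal.ofReal_pos.mpr (by positivity)).ne')
      · intro j k hjk
        have key : ∀ {m n : ℕ}, m < n →
            Disjoint (Icc (a m) (a m + Real.pi / |Δ|)) (Icc (a n) (a n + Real.pi / |Δ|)) := by
          intro m n hmn
          rw [Set.disjoint_left]
          intro x hx1 hx2
          have h1 := hkey hmn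
          have h2 := hx1.2
          have h3 := hx2.1
          linarith
        rcases lt_or_gt_of_ne hjk with h | h
        · exact key h
        · exact (key h).symm
    refine aux_not_int f δ 1 one_pos S hSm hsub hvol ?_
    intro ω hω
    obtain ⟨k, hk⟩ := mem_iUnion.mp hω
    have hω0 : 0 < ω := hδ.trans (hsub hω)
    have hcos : Real.cos (ω * Δ) ≤ 0 := by
      have h1 : Real.cos (ω * Δ) = Real.cos (ω * |Δ|) := by
        rw [← Real.cos_abs (ω * Δ), abs_mul, abs_of_pos hω0]
      have h2 : Real.cos (ω * |Δ|)
          = Real.cos (ω * |Δ| - ((k + K : ℤ) : ℝ) * (2 * Real.pi)) :=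
        (Real.cos_sub_int_mul_two_pi _ _).symm
      have hlb : Real.pi / 2 + 2 * Real.pi * ((k : ℝ) + K) ≤ ω * |Δ| := by
        have h3 := hk.1
        rw [hadef] at h3
        calc Real.pi / 2 + 2 * Real.pi * ((k : ℝ) + K)
            = (Real.pi / 2 + 2 * Real.pi * ((k : ℝ) + K)) / |Δ| * |Δ| := by
              field_simp
          _ ≤ ω * |Δ| := mul_le_mul_of_nonneg_right h3 hd.le
      have hub : ω * |Δ| ≤ Real.pi / 2 + 2 * Real.pi * ((k : ℝ) + K) + Real.pi := by
        have h3 := hk.2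
        rw [hadef] at h3
        calc ω * |Δ| ≤ ((Real.pi / 2 + 2 * Real.pi * ((k : ℝ) + K)) / |Δ| + Real.pi / |Δ|) * |Δ| :=
              mul_le_mul_of_nonneg_right h3 hd.le
          _ = Real.pi / 2 + 2 * Real.pi * ((k : ℝ) + K) + Real.pi := by
              field_simp
      rw [h1, h2]
      apply Real.cos_nonpos_of_pi_div_two_le_of_le
      · push_cast; linarith
      · push_cast; linarith
    have hterm : c * Real.cos (ω * Δ) * R ω ≤ 0 :=
      mul_nonpos_of_nonpos_of_nonneg
        (mul_nonpos_of_nonneg_of_nonpos hc.le hcos) (hRpos ω)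
    nlinarith [hlow ω]
end

section
/- Let b, b̃ > 0, c > 0, Δ ∈ ℝ, and δ > 0. Then the function ω ↦ | c · exp(iωΔ) · (b̃² + ω²)/(b² + ω²) − 1 |² (squared complex modulus) is Lebesgue integrable on (δ, ∞) if and only if c = 1 and Δ = 0. (This is the integral test characterization of equivalence for the LExp kernel, corresponding to smoothness ν = 1/2: two LExp GPlag models are equivalent exactly when their microergodic parameters σ²b, a, s coincide.) -/
open MeasureTheory Set Complex

private lemma lexp_abs_sq_eq (c θ : ℝ) :
    ‖(c:ℂ) * Complex.exp ((θ:ℂ) * Complex.I) - 1‖ ^ 2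
      = c^2 + 1 - 2*c*Real.cos θ := by
  have h : (c:ℂ) * Complex.exp ((θ:ℂ) * Complex.I) - 1
      = ((c * Real.cos θ - 1 : ℝ) : ℂ) + ((c * Real.sin θ : ℝ) : ℂ) * Complex.I := by
    rw [Complex.exp_mul_I]
    push_cast
    ring
  rw [h, Complex.sq_norm, Complex.normSq_add_mul_I]
  nlinarith [Real.sin_sq_add_cos_sq θ]

/-- Integral-test characterization of equivalence for the time-lag exponential (LExp)
kernel (smoothness `ν = 1/2`): for `b, b̃ > 0`, `c > 0`, `Δ ∈ ℝ` and `δ > 0`, the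
squared modulus `|c·e^{iωΔ}·(b̃²+ω²)/(b²+ω²) - 1|²` is Lebesgue integrable on
`(δ, ∞)` if and only if `c = 1` and `Δ = 0`, i.e. exactly when the microergodic
parameters `σ²b, a, s` of the two LExp GPlag models coincide. -/
theorem lexp_spectral_ratio_tail_integrable_iff (b bt c Δ δ : ℝ)
    (hb : 0 < b) (hbt : 0 < bt) (hc : 0 < c) (hδ : 0 < δ) :
    IntegrableOn
      (fun ω : ℝ => ‖(c : ℂ) * Complex.exp (Complex.I * ω * Δ) *
          (((bt ^ 2 + ω ^ 2) / (b ^ 2 + ω ^ 2) : ℝ) : ℂ) - 1‖ ^ 2)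
      (Ioi δ) volume ↔ (c = 1 ∧ Δ = 0) := by
  have hden : ∀ ω : ℝ, (0:ℝ) < b ^ 2 + ω ^ 2 := fun ω => by positivity
  -- integrability of the error term  (K/(b²+ω²))²
  have herr : ∀ K : ℝ, IntegrableOn (fun ω : ℝ => (K / (b ^ 2 + ω ^ 2)) ^ 2)
      (Ioi δ) volume := by
    intro K
    have hbase : IntegrableOn (fun ω : ℝ => ω ^ (-4 : ℝ)) (Ioi δ) volume :=
      integrableOn_Ioi_rpow_of_lt (by norm_num) hδ
    have hKint : IntegrableOn (fun ω : ℝ => K ^ 2 * ω ^ (-4 : ℝ)) (Ioi δ) volume :=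
      hbase.const_mul _
    refine hKint.mono' ?_ ?_
    · apply Continuous.aestronglyMeasurable
      exact (continuous_const.div (by fun_prop) (fun ω => (hden ω).ne')).pow 2
    · filter_upwards [ae_restrict_mem measurableSet_Ioi] with ω hω
      have hω0 : (0:ℝ) < ω := hδ.trans hω
      have h2 : (K / (b ^ 2 + ω ^ 2)) ^ 2 ≤ (K / ω ^ 2) ^ 2 := by
        rw [div_pow, div_pow]
        apply div_le_div_of_nonneg_left (by positivity) (by positivity)
        nlinarith
      have h3 : (K / ω ^ 2) ^ 2 = K ^ 2 * ω ^ (-4:ℝ) := by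
        rw [Real.rpow_neg hω0.le, show (4:ℝ) = ((4:ℕ):ℝ) by norm_num,
          Real.rpow_natCast, div_pow, ← pow_mul, div_eq_mul_inv]
      rw [Real.norm_eq_abs, _root_.abs_of_nonneg (by positivity), ← h3]
      exact h2
  -- rewrite the exponent
  have hexp : ∀ ω : ℝ, Complex.I * (ω:ℂ) * (Δ:ℂ) = ((ω * Δ : ℝ) : ℂ) * Complex.I := by
    intro ω; push_cast; ring
  constructor
  · intro hf
    set g : ℝ → ℝ := fun ω => c ^ 2 + 1 - 2 * c * Real.cos (ω * Δ) with hg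
    have hg_nonneg : ∀ ω, 0 ≤ g ω := by
      intro ω
      have h1 : Real.cos (ω * Δ) ≤ 1 := Real.cos_le_one (ω * Δ)
      simp only [hg]
      nlinarith [sq_nonneg (c - 1), mul_nonneg hc.le (sub_nonneg.2 h1)]
    have hgint : IntegrableOn g (Ioi δ) volume := by
      have hbound : IntegrableOn (fun ω : ℝ =>
          2 * ‖(c : ℂ) * Complex.exp (Complex.I * ω * Δ) *
            (((bt ^ 2 + ω ^ 2) / (b ^ 2 + ω ^ 2) : ℝ) : ℂ) - 1‖ ^ 2
          + 2 * ((c * (bt ^ 2 - b ^ 2)) / (b ^ 2 + ω ^ 2)) ^ 2) (Ioi δ) volume :=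
        (hf.const_mul 2).add ((herr (c * (bt ^ 2 - b ^ 2))).const_mul 2)
      refine hbound.mono' ?_ ?_
      · apply Continuous.aestronglyMeasurable
        have : Continuous fun ω : ℝ => Real.cos (ω * Δ) := by fun_prop
        exact continuous_const.sub (continuous_const.mul this)
      · filter_upwards [ae_restrict_mem measurableSet_Ioi] with ω hω
        set z : ℂ := (c:ℂ) * Complex.exp (Complex.I * ω * Δ) with hz
        set w : ℝ := (bt ^ 2 + ω ^ 2) / (b ^ 2 + ω ^ 2) with hw
        have habsz : ‖z‖ = c := by
          rw [hz, norm_mul, hexp ω, Complex.norm_exp_ofReal_mul_I, Complex.norm_real, Real.norm_eq_abs,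
            abs_of_pos hc, mul_one]
        have hzw : z - 1 = (z * (w:ℂ) - 1) - z * ((w:ℂ) - 1) := by ring
        have htri : ‖z - 1‖ ≤ ‖z * (w:ℂ) - 1‖ + c * |w - 1| := by
          rw [hzw]
          refine (norm_sub_le _ _).trans ?_
          rw [norm_mul, habsz]
          gcongr
          rw [← Real.norm_eq_abs, ← Complex.norm_real]
          push_cast
          exact le_rfl
        have hgω : g ω = ‖z - 1‖ ^ 2 := by
          rw [hz, hexp ω, lexp_abs_sq_eq]
        have hw1 : w - 1 = (bt ^ 2 - b ^ 2) / (b ^ 2 + ω ^ 2) := by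
          rw [hw]
          field_simp
          ring
        have hsq : (c * |w - 1|) ^ 2 = (c * (bt ^ 2 - b ^ 2) / (b ^ 2 + ω ^ 2)) ^ 2 := by
          rw [mul_pow, _root_.sq_abs, hw1]
          ring
        rw [Real.norm_eq_abs, _root_.abs_of_nonneg (hg_nonneg ω), hgω]
        have h1 : ‖z - 1‖ ^ 2
            ≤ (‖z * (w:ℂ) - 1‖ + c * |w - 1|) ^ 2 :=
          pow_le_pow_left₀ (norm_nonneg _) htri 2
        nlinarith [sq_nonneg (‖z * (w:ℂ) - 1‖ - c * |w - 1|)]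
    by_cases hΔ : Δ = 0
    · subst hΔ
      refine ⟨?_, rfl⟩
      have hconst : IntegrableOn (fun _ : ℝ => c ^ 2 + 1 - 2 * c) (Ioi δ) volume := by
        refine hgint.congr_fun (fun x _ => ?_) measurableSet_Ioi
        simp [hg]
      rcases (integrableOn_const_iff (C := c ^ 2 + 1 - 2 * c)).1 hconst with h | h
      · have h' : (c - 1) ^ 2 = 0 := by rw [enorm_eq_zero] at h; nlinarith
        have := pow_eq_zero_iff (n := 2) (by norm_num) |>.1 h'
        linarith
      · rw [Real.volume_Ioi] at h
        exact absurd h (by simp)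
    · exfalso
      set M : ℝ := ∫ x in Ioi δ, g x with hM
      have hM0 : 0 ≤ M := setIntegral_nonneg measurableSet_Ioi fun x _ => hg_nonneg x
      have hInt : ∀ N : ℝ, δ ≤ N → (∫ x in δ..N, g x) ≤ M := by
        intro N hN
        rw [intervalIntegral.integral_of_le hN]
        refine setIntegral_mono_set hgint ?_ ?_
        · exact Filter.Eventually.of_forall hg_nonneg
        · exact (Ioc_subset_Ioi_self).eventuallyLE
      have hcalc : ∀ N : ℝ, (∫ x in δ..N, g x)
          = (c ^ 2 + 1) * (N - δ)
            - 2 * c * (Δ⁻¹ * (Real.sin (N * Δ) - Real.sin (δ * Δ))) := by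
        intro N
        have hc1 : IntervalIntegrable (fun _ : ℝ => c ^ 2 + 1) volume δ N :=
          intervalIntegrable_const
        have hcont : Continuous fun x : ℝ => 2 * c * Real.cos (x * Δ) := by fun_prop
        have hc2 : IntervalIntegrable (fun x : ℝ => 2 * c * Real.cos (x * Δ)) volume δ N :=
          hcont.intervalIntegrable δ N
        have hsplit : (∫ x in δ..N, g x)
            = (∫ x in δ..N, (c ^ 2 + 1 : ℝ)) - ∫ x in δ..N, 2 * c * Real.cos (x * Δ) := by
          rw [← intervalIntegral.integral_sub hc1 hc2]
        rw [hsplit, intervalIntegral.integral_const,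
          intervalIntegral.integral_const_mul,
          intervalIntegral.integral_comp_mul_right Real.cos hΔ,
          integral_cos, smul_eq_mul, smul_eq_mul]
        ring
      set N : ℝ := δ + (M + 4 * c * |Δ|⁻¹ + 1) / (c ^ 2 + 1) with hN
      have hcN : (0:ℝ) < c ^ 2 + 1 := by positivity
      have hNδ : δ ≤ N := by
        rw [hN]
        have : 0 ≤ (M + 4 * c * |Δ|⁻¹ + 1) / (c ^ 2 + 1) := by positivity
        linarith
      have hsinbd : |Δ⁻¹ * (Real.sin (N * Δ) - Real.sin (δ * Δ))| ≤ |Δ|⁻¹ * 2 := by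
        rw [abs_mul, abs_inv]
        gcongr
        have h1 := Real.neg_one_le_sin (N * Δ)
        have h2 := Real.neg_one_le_sin (δ * Δ)
        have h3 := Real.sin_le_one (N * Δ)
        have h4 := Real.sin_le_one (δ * Δ)
        rw [abs_le]
        constructor <;> linarith
      have key := hInt N hNδ
      rw [hcalc N] at key
      have hNval : (c ^ 2 + 1) * (N - δ) = M + 4 * c * |Δ|⁻¹ + 1 := by
        rw [hN]
        field_simp
        ring
      have habs : 2 * c * (Δ⁻¹ * (Real.sin (N * Δ) - Real.sin (δ * Δ)))
          ≤ 2 * c * (|Δ|⁻¹ * 2) := by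
        have h5 := (le_abs_self (Δ⁻¹ * (Real.sin (N * Δ) - Real.sin (δ * Δ)))).trans hsinbd
        nlinarith
      nlinarith
  · rintro ⟨rfl, rfl⟩
    refine (herr (bt ^ 2 - b ^ 2)).congr_fun (fun ω _ => ?_) measurableSet_Ioi
    have hne : (b:ℂ) ^ 2 + (ω:ℂ) ^ 2 ≠ 0 := by
      intro hcontra
      have h0 : ((b ^ 2 + ω ^ 2 : ℝ) : ℂ) = 0 := by push_cast; rw [← hcontra]
      rw [Complex.ofReal_eq_zero] at h0
      linarith [hden ω]
    have h : ((1:ℝ):ℂ) * Complex.exp (Complex.I * ω * ((0:ℝ):ℂ)) *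
        (((bt ^ 2 + ω ^ 2) / (b ^ 2 + ω ^ 2) : ℝ) : ℂ) - 1
        = (((bt ^ 2 - b ^ 2) / (b ^ 2 + ω ^ 2) : ℝ) : ℂ) := by
      push_cast
      rw [mul_zero, Complex.exp_zero]
      field_simp
      ring
    rw [h, Complex.norm_real, Real.norm_eq_abs, _root_.sq_abs]
end
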